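/- arXiv:1012.1541 — 4 statements merged into one kernel-verified Lean document; each statement's English description precedes it below -/
import Mathlib

section
/- If f : X → Y is a homotopy equivalence of relative categories (i.e. there exists a relative functor g : Y → X such that gf and fg are connected to the respective identity functors by finite zigzags of natural weak equivalences), and both X and Y satisfy the two-out-of-three property for their weak equivalences, then a morphism x : X₁ → X₂ in X is a weak equivalence if and only if f(x) : f(X₁) → f(X₂) is a weak equivalence in Y. -/
open CategoryTheory

/-- A (small) relative category: a category `C` together with a wide subcategory `W`
of weak equivalences (containing all identities and closed under composition). -/
structure RelativeCat where
  C : Type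
  [cat : SmallCategory C]
  W : MorphismProperty C
  id_mem : ∀ X : C, W (𝟙 X)
  comp_mem : ∀ {X Y Z : C} (f : X ⟶ Y) (g : Y ⟶ Z), W f → W g → W (f ≫ g)

attribute [instance] RelativeCat.cat

/-- A relative functor: a weak-equivalence-preserving functor. -/
structure RelFunctor (X Y : RelativeCat) where
  F : X.C ⥤ Y.C
  mapW : ∀ {A B : X.C} (f : A ⟶ B), X.W f → Y.W (F.map f)

/-- A single natural weak equivalence between two functors `X.C ⥤ Y.C`:
a natural transformation all of whose components are weak equivalences of `Y`. -/
def NatWE (X Y : RelativeCat) (F G : X.C ⥤ Y.C) : Prop :=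
  ∃ η : F ⟶ G, ∀ A : X.C, Y.W (η.app A)

/-- Two functors are naturally weakly equivalent if they are connected by a finite
zigzag of natural weak equivalences. -/
def NatWEquiv (X Y : RelativeCat) (F G : X.C ⥤ Y.C) : Prop :=
  Relation.EqvGen (NatWE X Y) F G

/-- A relative functor is a homotopy equivalence if it admits a homotopy inverse. -/
def IsHomotopyEquiv {X Y : RelativeCat} (f : RelFunctor X Y) : Prop :=
  ∃ g : RelFunctor Y X,
    NatWEquiv X X (f.F ⋙ g.F) (𝟭 X.C) ∧ NatWEquiv Y Y (g.F ⋙ f.F) (𝟭 Y.C)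

/-- The two out of three property for the weak equivalences of a relative category. -/
def TwoOutOfThree (X : RelativeCat) : Prop :=
  ∀ {A B C : X.C} (u : A ⟶ B) (v : B ⟶ C),
    (X.W u → X.W v → X.W (u ≫ v)) ∧
    (X.W u → X.W (u ≫ v) → X.W v) ∧
    (X.W v → X.W (u ≫ v) → X.W u)

/-!
By naturality, a natural weak equivalence `η : F ⟶ G` puts `F x` and `G x` on opposite sides of
a commutative square whose other two sides are weak equivalences, so by two-out-of-three one is
a weak equivalence iff the other is. Along the zigzag joining `f ⋙ g` to the identity, `x` is
therefore a weak equivalence as soon as `g (f x)` is, and that holds when `f x` is.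
-/

lemma TwoOutOfThree.W_iff_of_commSq {X : RelativeCat} (t : TwoOutOfThree X)
    {A B A' B' : X.C} {a : A ⟶ B} {i : A ⟶ A'} {j : B ⟶ B'} {b : A' ⟶ B'}
    (sq : CommSq a i j b) (hi : X.W i) (hj : X.W j) :
    X.W a ↔ X.W b := by
  constructor
  · intro ha
    have hib : X.W (i ≫ b) := sq.w ▸ (t a j).1 ha hj
    exact (t i b).2.1 hi hib
  · intro hb
    have haj : X.W (a ≫ j) := sq.w ▸ (t i b).1 hi hb
    exact (t a j).2.2 hj haj

lemma NatWE.W_map_iff {X Y : RelativeCat} (tY : TwoOutOfThree Y) {F G : X.C ⥤ Y.C}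
    (h : NatWE X Y F G) {A B : X.C} (x : A ⟶ B) :
    Y.W (F.map x) ↔ Y.W (G.map x) := by
  obtain ⟨η, hη⟩ := h
  exact tY.W_iff_of_commSq ⟨η.naturality x⟩ (hη A) (hη B)

lemma NatWEquiv.W_map_iff {X Y : RelativeCat} (tY : TwoOutOfThree Y) {F G : X.C ⥤ Y.C}
    (h : NatWEquiv X Y F G) {A B : X.C} (x : A ⟶ B) :
    Y.W (F.map x) ↔ Y.W (G.map x) := by
  induction h with
  | rel _ _ h => exact h.W_map_iff tY x
  | refl => rfl
  | symm _ _ _ ih => exact ih.symm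
  | trans _ _ _ _ _ ih₁ ih₂ => exact ih₁.trans ih₂

theorem weakEquivalence_iff_of_homotopyEquivalence_general
    (X Y : RelativeCat) (f : RelFunctor X Y) (g : RelFunctor Y X)
    (h₁ : NatWEquiv X X (f.F ⋙ g.F) (𝟭 X.C))
    (tX : TwoOutOfThree X)
    {X₁ X₂ : X.C} (x : X₁ ⟶ X₂) :
    X.W x ↔ Y.W (f.F.map x) :=
  ⟨f.mapW x, fun hfx => (h₁.W_map_iff tX x).1 (g.mapW _ hfx)⟩

/-- If `f : X → Y` is a homotopy equivalence of relative categories (with homotopy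
inverse `g`), and both `X` and `Y` satisfy the two-out-of-three property, then a map
`x` in `X` is a weak equivalence iff `f x` is a weak equivalence in `Y`. -/
theorem weakEquivalence_iff_of_homotopyEquivalence
    (X Y : RelativeCat) (f : RelFunctor X Y) (g : RelFunctor Y X)
    (h₁ : NatWEquiv X X (f.F ⋙ g.F) (𝟭 X.C))
    (h₂ : NatWEquiv Y Y (g.F ⋙ f.F) (𝟭 Y.C))
    (tX : TwoOutOfThree X) (tY : TwoOutOfThree Y)
    {X₁ X₂ : X.C} (x : X₁ ⟶ X₂) :
    X.W x ↔ Y.W (f.F.map x) :=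
  weakEquivalence_iff_of_homotopyEquivalence_general X Y f g h₁ tX x
end

section
/- For any small category C, the nerve of C and the nerve of its opposite category C^op are weakly homotopy equivalent simplicial sets. -/
open CategoryTheory Simplicial Opposite

/-- A map of topological spaces is a homotopy equivalence if it admits a two-sided
homotopy inverse. -/
def IsTopHomotopyEquiv {X Y : TopCat} (f : X ⟶ Y) : Prop :=
  ∃ g : Y ⟶ X,
    ContinuousMap.Homotopic (TopCat.Hom.hom (f ≫ g)) (TopCat.Hom.hom (𝟙 X)) ∧
      ContinuousMap.Homotopic (TopCat.Hom.hom (g ≫ f)) (TopCat.Hom.hom (𝟙 Y))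

/-- A map of simplicial sets is a weak homotopy equivalence: it induces isomorphisms
on all homotopy groups of geometric realizations; since geometric realizations are
CW complexes this is equivalent (by Whitehead's theorem) to its geometric
realization being a homotopy equivalence, which is how we phrase it. -/
noncomputable def SSet.IsWeakEquiv {X Y : SSet} (f : X ⟶ Y) : Prop :=
  IsTopHomotopyEquiv (SSet.toTop.map f)

/-!
The nerve of `Cᵒᵖ` is the nerve of `C` with the vertices of every simplex listed in reverse order,
i.e. the precomposition `(nerve C).op` of `nerve C` with the involution `rev` of the simplex
category. Reversing barycentric coordinates identifies `rev ⋙ SimplexCategory.toTop` with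
`SimplexCategory.toTop`, so the singular simplicial set functor commutes with this involution, and
by uniqueness of left adjoints so does geometric realization. Hence `|nerve C|` and `|nerve Cᵒᵖ|`
are even homeomorphic.
-/

universe u

noncomputable section

namespace stdSimplex

variable {X Y : Type*} [Fintype X] [Fintype Y]

def mapHomeomorph (e : X ≃ Y) : stdSimplex ℝ X ≃ₜ stdSimplex ℝ Y where
  toFun := map e
  invFun := map e.symm
  left_inv s := by simp [map_comp_apply]
  right_inv s := by simp [map_comp_apply]
  continuous_toFun := continuous_map _
  continuous_invFun := continuous_map _

end stdSimplex

namespace SimplexCategory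

lemma stdSimplex_map_rev_map {m n : SimplexCategory} (f : m ⟶ n)
    (s : stdSimplex ℝ (Fin (m.len + 1))) :
    stdSimplex.map Fin.rev (stdSimplex.map (rev.map f).toOrderHom s) =
      stdSimplex.map f.toOrderHom (stdSimplex.map Fin.rev s) := by
  rw [stdSimplex.map_comp_apply, stdSimplex.map_comp_apply]
  congr 1
  funext i
  exact Fin.rev_rev _

def toTop₀RevIso : rev ⋙ toTop₀ ≅ toTop₀ :=
  NatIso.ofComponents (fun _ => TopCat.isoOfHomeo (stdSimplex.mapHomeomorph Fin.revPerm))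
    (fun f => by
      ext s : 2
      exact stdSimplex_map_rev_map f s)

def toTopRevIso : rev ⋙ toTop.{u} ≅ toTop :=
  Functor.isoWhiskerRight toTop₀RevIso TopCat.uliftFunctor

end SimplexCategory

def TopCat.toSSetOpIso : TopCat.toSSet.{u} ⋙ SSet.opFunctor ≅ TopCat.toSSet :=
  Functor.isoWhiskerLeft uliftYoneda.{0}
    ((Functor.whiskeringLeft _ _ _).mapIso (NatIso.op SimplexCategory.toTopRevIso).symm)

def SSet.toTopOpIso : SSet.opFunctor ⋙ SSet.toTop.{u} ≅ SSet.toTop :=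
  ((SSet.opEquivalence.toAdjunction.comp sSetTopAdj).ofNatIsoRight
    TopCat.toSSetOpIso).leftAdjointUniq sSetTopAdj

def Fin.revFunctor (n : ℕ) : Fin n ⥤ (Fin n)ᵒᵖ where
  obj i := op i.rev
  map h := (homOfLE (Fin.rev_le_rev.mpr (leOfHom h))).op

lemma Fin.revFunctor_comp_op_comp_unopUnop (n : ℕ) :
    Fin.revFunctor n ⋙ (Fin.revFunctor n).op ⋙ unopUnop _ = 𝟭 _ :=
  CategoryTheory.Functor.ext (fun i => Fin.rev_rev i) (fun _ _ _ => Subsingleton.elim _ _)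

lemma SimplexCategory.revFunctor_comp_toCat_map_op {m n : SimplexCategory} (f : m ⟶ n) :
    Fin.revFunctor _ ⋙ (toCat.map f).toFunctor.op =
      (toCat.map (rev.map f)).toFunctor ⋙ Fin.revFunctor _ :=
  CategoryTheory.Functor.ext (fun _ => congrArg op (Fin.rev_rev _).symm)
    (fun _ _ _ => Subsingleton.elim (α := (_ : (Fin (n.len + 1))ᵒᵖ) ⟶ _) _ _)

namespace CategoryTheory

namespace ComposableArrows

variable {C : Type*} [Category C] {n : ℕ}

def leftOpRev (F : ComposableArrows Cᵒᵖ n) : ComposableArrows C n :=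
  Fin.revFunctor _ ⋙ F.leftOp

def opRev (G : ComposableArrows C n) : ComposableArrows Cᵒᵖ n :=
  Fin.revFunctor _ ⋙ G.op

lemma opRev_leftOpRev (F : ComposableArrows Cᵒᵖ n) : F.leftOpRev.opRev = F :=
  congrArg (· ⋙ F) (Fin.revFunctor_comp_op_comp_unopUnop (n + 1))

lemma leftOpRev_opRev (G : ComposableArrows C n) : G.opRev.leftOpRev = G :=
  congrArg (· ⋙ G) (Fin.revFunctor_comp_op_comp_unopUnop (n + 1))

def leftOpRevEquiv : ComposableArrows Cᵒᵖ n ≃ ComposableArrows C n where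
  toFun := leftOpRev
  invFun := opRev
  left_inv := opRev_leftOpRev
  right_inv := leftOpRev_opRev

end ComposableArrows

def nerveOpIso (C : Type u) [Category.{u} C] : nerve Cᵒᵖ ≅ (nerve C).op :=
  NatIso.ofComponents (fun _ => Equiv.toIso ComposableArrows.leftOpRevEquiv) (fun g => by
    ext F
    exact congrArg (· ⋙ F.leftOp) (SimplexCategory.revFunctor_comp_toCat_map_op g.unop))

def toTopNerveOpIso (C : Type u) [Category.{u} C] : |nerve Cᵒᵖ| ≅ |nerve C| :=
  SSet.toTop.mapIso (nerveOpIso C) ≪≫ SSet.toTopOpIso.app (nerve C)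

end CategoryTheory

lemma CategoryTheory.Iso.isTopHomotopyEquiv_hom {X Y : TopCat} (e : X ≅ Y) :
    IsTopHomotopyEquiv e.hom :=
  ⟨e.inv, by rw [e.hom_inv_id], by rw [e.inv_hom_id]⟩

end

/-- For any small category `C`, the nerve of `C` and the nerve of `Cᵒᵖ` are weakly
homotopy equivalent simplicial sets: there is a map between their geometric
realizations which is a (weak, equivalently by Whitehead's theorem an actual)
homotopy equivalence. -/
theorem nerve_op_weaklyEquivalent (C : Type) [SmallCategory C] :
    ∃ f : SSet.toTop.obj (nerve C) ⟶ SSet.toTop.obj (nerve Cᵒᵖ),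
      IsTopHomotopyEquiv f :=
  ⟨_, (toTopNerveOpIso C).symm.isTopHomotopyEquiv_hom⟩
end

section
/- Let A be a simplicial category and k ≥ 0. The assignment sending an object ((p₀,A₀) → ⋯ → (p_k,A_k)) of (YA)_k, with morphisms (t_i, a_i), to the object ((p_k, A₀) → ⋯ → (p_k, A_k)) with morphisms (id, t_k⋯t_{i+1} a_i), together with the evident comparison map built from (t_k⋯t_1, id), ..., (id, id), defines a functor r : (YA)_k → (Ȳ A)_k and a natural transformation from the identity of (YA)_k to the inclusion ∘ r, exhibiting (Ȳ A)_k as a deformation retract; in particular the inclusion (Ȳ A)_k ⊆ (YA)_k induces a homotopy equivalence of nerves. -/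
open CategoryTheory Opposite

/-- A (small) simplicial category with fixed object set `O`, presented as the
equivalent data of a simplicial diagram of categories `A_•` all having object
set `O`, on which the simplicial operators act as the identity on objects:
for each pair of objects a hom simplicial set, together with level-wise
identities and compositions which are compatible with the simplicial operators. -/
structure SCat where
  O : Type
  H : O → O → SSet
  ident : ∀ (X : O) (p : SimplexCategoryᵒᵖ), (H X X).obj p
  comp : ∀ {X Y Z : O} {p : SimplexCategoryᵒᵖ},
    (H X Y).obj p → (H Y Z).obj p → (H X Z).obj p
  id_comp : ∀ {X Y : O} {p : SimplexCategoryᵒᵖ} (f : (H X Y).obj p),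
    comp (ident X p) f = f
  comp_id : ∀ {X Y : O} {p : SimplexCategoryᵒᵖ} (f : (H X Y).obj p),
    comp f (ident Y p) = f
  assoc : ∀ {W X Y Z : O} {p : SimplexCategoryᵒᵖ} (f : (H W X).obj p)
    (g : (H X Y).obj p) (h : (H Y Z).obj p),
    comp (comp f g) h = comp f (comp g h)
  comp_natural : ∀ {X Y Z : O} {p q : SimplexCategoryᵒᵖ} (t : p ⟶ q)
    (f : (H X Y).obj p) (g : (H Y Z).obj p),
    (H X Z).map t (comp f g) = comp ((H X Y).map t f) ((H Y Z).map t g)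
  ident_natural : ∀ (X : O) {p q : SimplexCategoryᵒᵖ} (t : p ⟶ q),
    (H X X).map t (ident X p) = ident X q

namespace SCat

variable (A : SCat)

/-- Objects of the Grothendieck construction `bA`: pairs `(p, A)` of a simplicial
dimension and an object of `A`. -/
structure BObj where
  p : SimplexCategoryᵒᵖ
  pt : A.O

variable {A}

/-- Morphisms `(p₁, A₁) → (p₂, A₂)` of the Grothendieck construction `bA`: pairs
`(t, a)` where `t : [p₂] → [p₁]` in `Δ` (i.e. `p₁ ⟶ p₂` in `Δᵒᵖ`) and
`a : t* A₁ = A₁ → A₂` is a morphism of `A_{p₂}`. -/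
structure BHom (X Y : A.BObj) where
  t : X.p ⟶ Y.p
  a : (A.H X.pt Y.pt).obj Y.p

/-- The identity morphism `(id, id)` of `bA`. -/
def bId (X : A.BObj) : BHom X X :=
  ⟨𝟙 X.p, A.ident X.pt X.p⟩

/-- The composition `(t', a') ∘ (t, a) = (t' t, a' ∘ (t'* a))` of `bA`. -/
def bComp {X Y Z : A.BObj} (f : BHom X Y) (g : BHom Y Z) : BHom X Z :=
  ⟨f.t ≫ g.t, A.comp ((A.H X.pt Y.pt).map g.t f.a) g.a⟩

end SCat

namespace SCat

variable {A : SCat}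

/-- The Grothendieck construction `bA` as a category. -/
instance : Category A.BObj where
  Hom := BHom
  id := bId
  comp := bComp
  id_comp f := by
    cases f with
    | mk t a => simp [bId, bComp, A.ident_natural, A.id_comp]
  comp_id f := by
    cases f with
    | mk t a => simp [bId, bComp, A.comp_id]
  assoc f g h := by
    simp [bComp, A.comp_natural, A.assoc, FunctorToTypes.map_comp_apply]

/-- A morphism of `bA` is "of the form `(t, id)`" if its second component is an
identity of `A` (which forces the underlying objects of `A` to agree). -/
def IsIdMap {X Y : A.BObj} (f : X ⟶ Y) : Prop :=
  ∃ _ : X.pt = Y.pt, HEq (BHom.a f) (A.ident X.pt Y.p)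

lemma isIdMap_id (X : A.BObj) : IsIdMap (𝟙 X) := ⟨rfl, HEq.rfl⟩

lemma isIdMap_comp {X Y Z : A.BObj} {f : X ⟶ Y} {g : Y ⟶ Z}
    (hf : IsIdMap f) (hg : IsIdMap g) : IsIdMap (f ≫ g) := by
  obtain ⟨px, x⟩ := X; obtain ⟨py, y⟩ := Y; obtain ⟨pz, z⟩ := Z
  obtain ⟨t, a⟩ := f; obtain ⟨s, b⟩ := g
  obtain ⟨h₁, e₁⟩ := hf; obtain ⟨h₂, e₂⟩ := hg
  dsimp at h₁ h₂ e₁ e₂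
  subst h₁; subst h₂
  refine ⟨rfl, ?_⟩
  cases e₁; cases e₂
  show HEq (A.comp ((A.H x x).map s (A.ident x py)) (A.ident x pz)) _
  rw [A.ident_natural, A.comp_id]

end SCat

namespace SCat

variable (A : SCat)

/-- The category `(YA)_k`: objects are `k`-chains of composable morphisms of the
Grothendieck construction `bA`, morphisms are commutative ladders in `bA` all of
whose vertical maps are of the form `(u, id)`. -/
def YObj (k : ℕ) : Type := Fin (k + 1) ⥤ A.BObj

instance (k : ℕ) : Category (YObj A k) where
  Hom C D := {η : NatTrans C D // ∀ i : Fin (k + 1), IsIdMap (η.app i)}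
  id C := ⟨NatTrans.id C, fun i => isIdMap_id _⟩
  comp f g := ⟨NatTrans.vcomp f.1 g.1, fun i => isIdMap_comp (f.2 i) (g.2 i)⟩
  id_comp f := by apply Subtype.ext; ext i; exact Category.id_comp _
  comp_id f := by apply Subtype.ext; ext i; exact Category.comp_id _
  assoc f g h := by apply Subtype.ext; ext i; exact Category.assoc _ _ _

/-- A chain is constant if all of its structure operators `t_i` are identities
(hence all the simplicial dimensions `p_i` agree). -/
def IsConstChain {k : ℕ} (C : YObj A k) : Prop :=
  ∀ {i j : Fin (k + 1)} (f : i ⟶ j),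
    ∃ h : (C.obj i).p = (C.obj j).p, BHom.t (C.map f) = eqToHom h

/-- The category `(ȲA)_k ⊆ (YA)_k`: the full subcategory of constant chains. -/
def YbarObj (k : ℕ) : Type := ObjectProperty.FullSubcategory (IsConstChain A (k := k))

instance (k : ℕ) : Category (YbarObj A k) :=
  ObjectProperty.FullSubcategory.category _

/-- The inclusion `(ȲA)_k ⊆ (YA)_k`. -/
def yInclusion (k : ℕ) : YbarObj A k ⥤ YObj A k :=
  ObjectProperty.ι _

end SCat

open Simplicial

namespace SSet

/-- The constant map to a vertex of `Δ[1]`. -/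
def constMap (X : SSet) (k : Fin 2) : X ⟶ Δ[1] where
  app m := TypeCat.ofHom (fun _ => SSet.stdSimplex.const 1 k m)

/-- The cylinder `X × Δ[1]` on a simplicial set. -/
noncomputable def cyl (X : SSet) : SSet := Limits.prod X Δ[1]

/-- The two ends of the cylinder. -/
noncomputable def cylEnd (X : SSet) (k : Fin 2) : X ⟶ cyl X :=
  Limits.prod.lift (𝟙 X) (constMap X k)

/-- An elementary simplicial homotopy from `f` to `g`. -/
noncomputable def SHomotopy {X Y : SSet} (f g : X ⟶ Y) : Prop :=
  ∃ H : cyl X ⟶ Y, cylEnd X 0 ≫ H = f ∧ cylEnd X 1 ≫ H = g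

/-- Simplicially homotopic maps: connected by a finite chain of elementary
simplicial homotopies. -/
noncomputable def SHomotopic {X Y : SSet} (f g : X ⟶ Y) : Prop :=
  Relation.EqvGen SHomotopy f g

end SSet


/-!
Because simplicial operators act as the identity on objects, every stage of a chain
`(p₀,A₀) → ⋯ → (p_k,A_k)` can be pushed forward along the composite operator to the last
dimension `p_k`; this gives a constant chain `r C`, and the rungs `(t_k ⋯ t_{j+1}, id)` form a
ladder `C ⟶ r C`, natural in `C` and the identity when `C` is already constant.
A natural transformation `α : F ⟶ G` is a functor `C × [1] ⥤ D`, and its nerve is a simplicial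
homotopy `N C × Δ[1] ⟶ N D` from `N F` to `N G`; hence `r` is a homotopy inverse of the inclusion.
-/

namespace SSet

lemma cylEnd_comp_binaryProductIso_hom (X : SSet) (i : Fin 2) :
    cylEnd X i ≫ (FunctorToTypes.binaryProductIso X Δ[1]).hom =
      FunctorToTypes.prod.lift (𝟙 X) (constMap X i) := by
  ext m x
  · exact ConcreteCategory.congr_hom
      (NatTrans.congr_app (Limits.prod.lift_fst (𝟙 X) (constMap X i)) m) x
  · exact ConcreteCategory.congr_hom
      (NatTrans.congr_app (Limits.prod.lift_snd (𝟙 X) (constMap X i)) m) x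

lemma SHomotopy.mk {X Y : SSet} {f g : X ⟶ Y} (H : FunctorToTypes.prod X Δ[1] ⟶ Y)
    (h₀ : FunctorToTypes.prod.lift (𝟙 X) (constMap X 0) ≫ H = f)
    (h₁ : FunctorToTypes.prod.lift (𝟙 X) (constMap X 1) ≫ H = g) : SHomotopy f g :=
  ⟨(FunctorToTypes.binaryProductIso X Δ[1]).hom ≫ H,
    by rw [← h₀, ← cylEnd_comp_binaryProductIso_hom]; rfl,
    by rw [← h₁, ← cylEnd_comp_binaryProductIso_hom]; rfl⟩

lemma map_eqToHom_heq (X : SSet) {p q : SimplexCategoryᵒᵖ} (h : p = q)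
    (a : X.obj p) : X.map (eqToHom h) a ≍ a := by
  subst h; simp

end SSet

namespace CategoryTheory.NatTrans

variable {C D : Type} [Category.{0} C] [Category.{0} D] {F G : C ⥤ D}

def nerveHomotopy (α : F ⟶ G) : FunctorToTypes.prod (nerve C) Δ[1] ⟶ nerve D where
  app _ := TypeCat.ofHom fun p =>
    p.1.prod' p.2.down.toOrderHom.monotone.functor ⋙
      Functor.uncurry.obj (ComposableArrows.mk₁ α).flip
  naturality _ _ _ := rfl

lemma lift_const_zero_comp_nerveHomotopy (α : F ⟶ G) :
    FunctorToTypes.prod.lift (𝟙 _) (SSet.constMap _ 0) ≫ nerveHomotopy α =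
      nerveFunctor.map (X := Cat.of C) (Y := Cat.of D) F.toCatHom := by
  ext m x
  refine Functor.ext (fun _ => rfl) fun i j f => ?_
  show F.map (x.map f) ≫ 𝟙 _ = 𝟙 _ ≫ F.map (x.map f) ≫ 𝟙 _
  simp

lemma lift_const_one_comp_nerveHomotopy (α : F ⟶ G) :
    FunctorToTypes.prod.lift (𝟙 _) (SSet.constMap _ 1) ≫ nerveHomotopy α =
      nerveFunctor.map (X := Cat.of C) (Y := Cat.of D) G.toCatHom := by
  ext m x
  refine Functor.ext (fun _ => rfl) fun i j f => ?_
  show G.map (x.map f) ≫ 𝟙 _ = 𝟙 _ ≫ G.map (x.map f) ≫ 𝟙 _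
  simp

lemma shomotopy_nerveMap (α : F ⟶ G) :
    SSet.SHomotopy (nerveFunctor.map (X := Cat.of C) (Y := Cat.of D) F.toCatHom)
      (nerveFunctor.map (X := Cat.of C) (Y := Cat.of D) G.toCatHom) :=
  .mk (nerveHomotopy α) (lift_const_zero_comp_nerveHomotopy α)
    (lift_const_one_comp_nerveHomotopy α)

end CategoryTheory.NatTrans

namespace SSet

variable {C D : Type} [Category.{0} C] [Category.{0} D]

theorem exists_nerve_homotopyInverse_of_retraction (i : D ⥤ C) (r : C ⥤ D)
    (hri : i ⋙ r = 𝟭 D) (η : 𝟭 C ⟶ r ⋙ i) :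
    ∃ g : nerve C ⟶ nerve D,
      SHomotopic (nerveFunctor.map (X := Cat.of D) (Y := Cat.of C) i.toCatHom ≫ g) (𝟙 _) ∧
      SHomotopic (g ≫ nerveFunctor.map (X := Cat.of D) (Y := Cat.of C) i.toCatHom) (𝟙 _) := by
  refine ⟨nerveFunctor.map (X := Cat.of C) (Y := Cat.of D) r.toCatHom, ?_, ?_⟩
  · show SHomotopic (nerveFunctor.map (X := Cat.of D) (Y := Cat.of D) (i ⋙ r).toCatHom) _
    rw [hri]
    exact .refl _
  · show SHomotopic (nerveFunctor.map (X := Cat.of C) (Y := Cat.of C) (r ⋙ i).toCatHom)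
      (nerveFunctor.map (X := Cat.of C) (Y := Cat.of C) (𝟭 C).toCatHom)
    exact .symm _ _ (.rel _ _ η.shomotopy_nerveMap)

end SSet

namespace SCat

variable {A : SCat}

lemma BObj.ext {X Y : A.BObj} (hp : X.p = Y.p) (hpt : X.pt = Y.pt) : X = Y := by
  cases X; cases Y; congr

lemma BHom.ext {X Y : A.BObj} {f g : BHom X Y} (ht : f.t = g.t) (ha : f.a = g.a) : f = g := by
  cases f; cases g; congr

lemma BHom.hext {X Y X' Y' : A.BObj} (hX : X = X') (hY : Y = Y') {f : BHom X Y}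
    {g : BHom X' Y'} (ht : f.t ≍ g.t) (ha : f.a ≍ g.a) : f ≍ g := by
  subst hX hY
  cases f; cases g; cases ht; cases ha; rfl

lemma comp_t {X Y Z : A.BObj} (f : X ⟶ Y) (g : Y ⟶ Z) :
    BHom.t (f ≫ g) = BHom.t f ≫ BHom.t g := rfl

lemma comp_a {X Y Z : A.BObj} (f : X ⟶ Y) (g : Y ⟶ Z) :
    BHom.a (f ≫ g) = A.comp ((A.H _ _).map (BHom.t g) (BHom.a f)) (BHom.a g) := rfl

lemma isIdMap_mk_map {x y : A.O} (h : x = y) {p q q' : SimplexCategoryᵒᵖ} (t : q' ⟶ q)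
    (s : p ⟶ q) {a : (A.H x y).obj p} (ha : a ≍ A.ident x p) :
    IsIdMap (X := ⟨q', x⟩) (Y := ⟨q, y⟩) ⟨t, (A.H x y).map s a⟩ := by
  subst h
  exact ⟨rfl, by rw [eq_of_heq ha, A.ident_natural]⟩

variable {k : ℕ}

/-- The composite operator `t_k ⋯ t_{j+1}` of a chain. -/
def tToLast (C : YObj A k) (j : Fin (k + 1)) : (C.obj j).p ⟶ (C.obj (Fin.last k)).p :=
  BHom.t (C.map (homOfLE (Fin.le_last j)))

lemma map_t_comp_tToLast (C : YObj A k) {i j : Fin (k + 1)} (f : i ⟶ j) :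
    BHom.t (C.map f) ≫ tToLast C j = tToLast C i := by
  rw [tToLast, ← comp_t, ← C.map_comp]
  rfl

lemma app_t_comp_tToLast {C D : YObj A k} (u : C ⟶ D) (j : Fin (k + 1)) :
    BHom.t (u.1.app j) ≫ tToLast D j = tToLast C j ≫ BHom.t (u.1.app (Fin.last k)) :=
  (congrArg BHom.t (u.1.naturality (homOfLE (Fin.le_last j)))).symm

lemma tToLast_eq_eqToHom {C : YObj A k} (hC : IsConstChain A C) (j : Fin (k + 1)) :
    ∃ h, tToLast C j = eqToHom h :=
  hC _

/-- The constant chain `(p_k, A₀) → ⋯ → (p_k, A_k)` with maps `(id, t_k ⋯ t_{i+1} a_i)`. -/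
def retractChain (C : YObj A k) : YObj A k where
  obj j := ⟨(C.obj (Fin.last k)).p, (C.obj j).pt⟩
  map {i j} f := BHom.mk (X := ⟨(C.obj (Fin.last k)).p, (C.obj i).pt⟩)
    (Y := ⟨(C.obj (Fin.last k)).p, (C.obj j).pt⟩) (𝟙 _)
    ((A.H _ _).map (tToLast C j) (BHom.a (C.map f)))
  map_id j := by
    refine BHom.ext rfl ?_
    show (A.H _ _).map (tToLast C j) (BHom.a (C.map (𝟙 j))) = A.ident _ _
    rw [C.map_id]
    exact A.ident_natural _ _
  map_comp {i j l} f g := by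
    refine BHom.ext (Category.comp_id _).symm ?_
    show (A.H _ _).map (tToLast C l) (BHom.a (C.map (f ≫ g))) =
      A.comp ((A.H _ _).map (𝟙 _) ((A.H _ _).map (tToLast C j) (BHom.a (C.map f))))
        ((A.H _ _).map (tToLast C l) (BHom.a (C.map g)))
    rw [C.map_comp, comp_a, A.comp_natural, ← Functor.map_comp_apply, map_t_comp_tToLast,
      Functor.map_id_apply]

lemma retractChain_isConstChain (C : YObj A k) : IsConstChain A (retractChain C) :=
  fun {_ _} _ => ⟨rfl, rfl⟩

def retractMapApp {C D : YObj A k} (u : C ⟶ D) (j : Fin (k + 1)) :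
    (retractChain C).obj j ⟶ (retractChain D).obj j :=
  BHom.mk (BHom.t (X := C.obj (Fin.last k)) (Y := D.obj (Fin.last k)) (u.1.app (Fin.last k)))
    ((A.H _ _).map (tToLast D j) (BHom.a (u.1.app j)))

lemma retractMapApp_naturality {C D : YObj A k} (u : C ⟶ D) {i j : Fin (k + 1)} (f : i ⟶ j) :
    (retractChain C).map f ≫ retractMapApp u j = retractMapApp u i ≫ (retractChain D).map f := by
  refine BHom.ext ((Category.id_comp _).trans (Category.comp_id _).symm) ?_
  show A.comp ((A.H _ _).map (BHom.t (u.1.app (Fin.last k)))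
        ((A.H _ _).map (tToLast C j) (BHom.a (C.map f))))
        ((A.H _ _).map (tToLast D j) (BHom.a (u.1.app j))) =
      A.comp ((A.H _ _).map (𝟙 _) ((A.H _ _).map (tToLast D i) (BHom.a (u.1.app i))))
        ((A.H _ _).map (tToLast D j) (BHom.a (D.map f)))
  have ha := congrArg BHom.a (u.1.naturality f)
  simp only [comp_a] at ha
  rw [Functor.map_id_apply, ← Functor.map_comp_apply, ← app_t_comp_tToLast,
    Functor.map_comp_apply, ← A.comp_natural, ha, A.comp_natural, ← Functor.map_comp_apply,
    map_t_comp_tToLast]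

lemma retractMapApp_isIdMap {C D : YObj A k} (u : C ⟶ D) (j : Fin (k + 1)) :
    IsIdMap (retractMapApp u j) :=
  have ⟨h, ha⟩ := u.2 j
  isIdMap_mk_map h _ _ ha

def retraction : YObj A k ⥤ YbarObj A k where
  obj C := ⟨retractChain C, retractChain_isConstChain C⟩
  map u := ⟨⟨retractMapApp u, fun _ _ => retractMapApp_naturality u⟩, retractMapApp_isIdMap u⟩
  map_id C := by
    apply ObjectProperty.hom_ext; apply Subtype.ext; ext j
    apply BHom.ext
    · rfl
    · exact A.ident_natural _ (tToLast C j)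
  map_comp {C D E} u v := by
    apply ObjectProperty.hom_ext; apply Subtype.ext; ext j
    apply BHom.ext
    · rfl
    · show (A.H _ _).map (tToLast E j)
          (A.comp ((A.H _ _).map (BHom.t (v.1.app j)) (BHom.a (u.1.app j))) (BHom.a (v.1.app j))) =
        A.comp ((A.H _ _).map (BHom.t (v.1.app (Fin.last k)))
            ((A.H _ _).map (tToLast D j) (BHom.a (u.1.app j))))
          ((A.H _ _).map (tToLast E j) (BHom.a (v.1.app j)))
      rw [A.comp_natural, ← Functor.map_comp_apply, app_t_comp_tToLast, Functor.map_comp_apply]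

def toRetractApp (C : YObj A k) (j : Fin (k + 1)) : C.obj j ⟶ (retractChain C).obj j :=
  BHom.mk (X := C.obj j) (Y := (retractChain C).obj j) (tToLast C j)
    (A.ident (C.obj j).pt (C.obj (Fin.last k)).p)

lemma toRetractApp_naturality (C : YObj A k) {i j : Fin (k + 1)} (f : i ⟶ j) :
    C.map f ≫ toRetractApp C j = toRetractApp C i ≫ (retractChain C).map f := by
  refine BHom.ext ?_ ?_
  · show BHom.t (C.map f) ≫ tToLast C j = tToLast C i ≫ 𝟙 _
    rw [map_t_comp_tToLast, Category.comp_id]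
  · show A.comp ((A.H _ _).map (tToLast C j) (BHom.a (C.map f))) (A.ident _ _) =
      A.comp ((A.H _ _).map (𝟙 _) (A.ident _ _)) ((A.H _ _).map (tToLast C j) (BHom.a (C.map f)))
    rw [A.comp_id, Functor.map_id_apply, A.id_comp]

def toRetract : 𝟭 (YObj A k) ⟶ retraction ⋙ yInclusion A k where
  app C := ⟨⟨toRetractApp C, fun _ _ => toRetractApp_naturality C⟩, fun _ => ⟨rfl, .rfl⟩⟩
  naturality C D u := by
    apply Subtype.ext; ext j
    apply BHom.ext
    · exact app_t_comp_tToLast u j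
    · show A.comp ((A.H _ _).map (tToLast D j) (BHom.a (u.1.app j))) (A.ident _ _) =
        A.comp ((A.H _ _).map (BHom.t (u.1.app (Fin.last k))) (A.ident _ _))
          ((A.H _ _).map (tToLast D j) (BHom.a (u.1.app j)))
      rw [A.comp_id, A.ident_natural, A.id_comp]

lemma retractChain_eq_self {C : YObj A k} (hC : IsConstChain A C) : retractChain C = C := by
  have hp := tToLast_eq_eqToHom hC
  have hobj (j : Fin (k + 1)) : (retractChain C).obj j = C.obj j := BObj.ext (hp j).1.symm rfl
  refine Functor.hext hobj fun i j f => BHom.hext (hobj i) (hobj j) ?_ ?_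
  · obtain ⟨hij, hf⟩ := hC f
    show 𝟙 _ ≍ BHom.t (C.map f)
    rw [hf]
    exact (congr_arg_heq (fun X => 𝟙 X) (hp i).1).symm.trans (eqToHom_heq_id_dom _ _ hij).symm
  · show (A.H _ _).map (tToLast C j) (BHom.a (C.map f)) ≍ BHom.a (C.map f)
    rw [(hp j).2]
    exact SSet.map_eqToHom_heq _ _ _

lemma yHom_hext {C C' D D' : YObj A k} (hC : C = C') (hD : D = D') {u : C ⟶ D} {v : C' ⟶ D'}
    (h : ∀ j, u.1.app j ≍ v.1.app j) : u ≍ v := by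
  subst hC hD
  exact heq_of_eq (Subtype.ext (NatTrans.ext (funext fun j => eq_of_heq (h j))))

lemma ybarHom_hext {D D' E E' : YbarObj A k} (hD : D.obj = D'.obj) (hE : E.obj = E'.obj)
    {u : D ⟶ E} {v : D' ⟶ E'} (h : ∀ j, u.hom.1.app j ≍ v.hom.1.app j) : u ≍ v := by
  obtain ⟨D, _⟩ := D; obtain ⟨D', _⟩ := D'; obtain ⟨E, _⟩ := E; obtain ⟨E', _⟩ := E'
  subst hD hE
  exact heq_of_eq (ObjectProperty.hom_ext _ (eq_of_heq (yHom_hext rfl rfl h)))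

lemma retractMapApp_heq {C D : YObj A k} (hC : IsConstChain A C) (hD : IsConstChain A D)
    (u : C ⟶ D) (j : Fin (k + 1)) : retractMapApp u j ≍ u.1.app j := by
  obtain ⟨hCj, hC'⟩ := tToLast_eq_eqToHom hC j
  obtain ⟨hDj, hD'⟩ := tToLast_eq_eqToHom hD j
  refine BHom.hext (X := (retractChain C).obj j) (Y := (retractChain D).obj j)
    (BObj.ext hCj.symm rfl) (BObj.ext hDj.symm rfl) ?_ ?_
  · show BHom.t (u.1.app (Fin.last k)) ≍ BHom.t (u.1.app j)
    rw [← conj_eqToHom_iff_heq' _ _ hCj.symm hDj, ← hD', app_t_comp_tToLast, hC',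
      eqToHom_trans_assoc, eqToHom_refl, Category.id_comp]
  · show (A.H _ _).map (tToLast D j) (BHom.a (u.1.app j)) ≍ BHom.a (u.1.app j)
    rw [hD']
    exact SSet.map_eqToHom_heq _ _ _

theorem yInclusion_comp_retraction : yInclusion A k ⋙ retraction = 𝟭 (YbarObj A k) := by
  have hobj (D : YbarObj A k) : retraction.obj D.obj = D := by
    obtain ⟨D, hD⟩ := D
    show (⟨retractChain D, _⟩ : YbarObj A k) = ⟨D, hD⟩
    congr 1
    exact retractChain_eq_self hD
  refine Functor.hext hobj fun D E u => ybarHom_hext (retractChain_eq_self D.2)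
    (retractChain_eq_self E.2) (retractMapApp_heq D.2 E.2 u.hom)

theorem toRetract_app_heq_id (D : YbarObj A k) :
    toRetract.app ((yInclusion A k).obj D) ≍ 𝟙 ((yInclusion A k).obj D) := by
  refine yHom_hext rfl (retractChain_eq_self D.2) fun j => ?_
  obtain ⟨hj, hj'⟩ := tToLast_eq_eqToHom D.2 j
  refine BHom.hext (Y := (retractChain D.obj).obj j) rfl (BObj.ext hj.symm rfl) ?_ ?_
  · show tToLast D.obj j ≍ 𝟙 _
    rw [hj']
    exact eqToHom_heq_id_dom _ _ _
  · exact congr_arg_heq (A.ident _) hj.symm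

end SCat

open SCat

/-- For a simplicial category `A` and `k ≥ 0`, the assignment sending a chain
`(p₀,A₀) → ⋯ → (p_k,A_k)` of `(YA)_k` to the constant chain
`(p_k,A₀) → ⋯ → (p_k,A_k)` (with maps `(id, t_k ⋯ t_{i+1} a_i)`), together with
the comparison maps `(t_k ⋯ t_{i+1} ⋯ t_1, id)`, defines a functor
`r : (YA)_k → (ȲA)_k` and a natural transformation `𝟭 ⟶ r ⋙ incl` exhibiting
`(ȲA)_k` as a (strong) deformation retract of `(YA)_k`; in particular the
inclusion induces a homotopy equivalence of nerves. -/
theorem ybar_deformation_retract (A : SCat) (k : ℕ) :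
    ∃ (r : YObj A k ⥤ YbarObj A k) (η : 𝟭 (YObj A k) ⟶ r ⋙ yInclusion A k),
      yInclusion A k ⋙ r = 𝟭 (YbarObj A k) ∧
      (∀ (C : YObj A k) (j : Fin (k + 1)),
        ((r.obj C).obj).obj j = ⟨(C.obj (Fin.last k)).p, (C.obj j).pt⟩) ∧
      (∀ (C : YObj A k) (j : Fin (k + 1)),
        HEq ((η.app C).1.app j)
          (BHom.mk (X := C.obj j) (Y := ⟨(C.obj (Fin.last k)).p, (C.obj j).pt⟩)
            ((C.map (homOfLE (Fin.le_last j)) :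
              BHom (C.obj j) (C.obj (Fin.last k))).t)
            (A.ident (C.obj j).pt (C.obj (Fin.last k)).p))) ∧
      (∀ D : YbarObj A k,
        HEq (η.app ((yInclusion A k).obj D)) (𝟙 ((yInclusion A k).obj D))) ∧
      (∃ g : nerve (YObj A k) ⟶ nerve (YbarObj A k),
        SSet.SHomotopic
          (nerveFunctor.map (X := Cat.of (YbarObj A k)) (Y := Cat.of (YObj A k))
            (yInclusion A k).toCatHom ≫ g) (𝟙 _) ∧
        SSet.SHomotopic
          (g ≫ nerveFunctor.map (X := Cat.of (YbarObj A k)) (Y := Cat.of (YObj A k))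
            (yInclusion A k).toCatHom) (𝟙 _)) := by
  exact ⟨retraction, toRetract, yInclusion_comp_retraction, fun _ _ => rfl, fun _ _ => .rfl,
    toRetract_app_heq_id,
    SSet.exists_nerve_homotopyInverse_of_retraction _ _ yInclusion_comp_retraction toRetract⟩
end

section
/- For a simplicial category A, the simplicial nerve of the relative category Rel(A) = (bA, id-maps) is naturally isomorphic to the bisimplicial set obtained by applying the classical nerve dimensionwise to the simplicial category-object YA: N(Rel A) ≅ n(YA). -/
open CategoryTheory

open CategoryTheory

/-- The identity relative functor. -/
def RelFunctor.id (X : RelativeCat) : RelFunctor X X :=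
  ⟨𝟭 X.C, fun _ h => h⟩

/-- Composition of relative functors. -/
def RelFunctor.comp {X Y Z : RelativeCat} (f : RelFunctor X Y) (g : RelFunctor Y Z) :
    RelFunctor X Z :=
  ⟨f.F ⋙ g.F, fun φ h => g.mapW (f.F.map φ) (f.mapW φ h)⟩

/-- `p̂`: the relative poset `[p]` in which only the identities are weak
equivalences. -/
def hatRel (p : SimplexCategory) : RelativeCat where
  C := Fin (p.len + 1)
  W := fun {X Y} _ => X = Y
  id_mem _ := rfl
  comp_mem _ _ h₁ h₂ := h₁.trans h₂

/-- `q̌`: the relative poset `[q]` in which all maps are weak equivalences. -/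
def chkRel (q : SimplexCategory) : RelativeCat where
  C := Fin (q.len + 1)
  W := fun {_X _Y} _ => True
  id_mem _ := trivial
  comp_mem _ _ _ _ := trivial

/-- The product of two relative categories. -/
def prodRel (X Y : RelativeCat) : RelativeCat where
  C := X.C × Y.C
  cat := inferInstance
  W := fun {_P _Q} f => X.W f.1 ∧ Y.W f.2
  id_mem _ := ⟨X.id_mem _, Y.id_mem _⟩
  comp_mem f g hf hg := ⟨X.comp_mem _ _ hf.1 hg.1, Y.comp_mem _ _ hf.2 hg.2⟩

/-- The relative functor `p̂' → p̂` induced by a simplicial operator. -/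
def hatMap {p p' : SimplexCategory} (t : p ⟶ p') :
    RelFunctor (hatRel p) (hatRel p') :=
  ⟨t.toOrderHom.monotone.functor, fun {A B} _ h => congrArg t.toOrderHom h⟩

/-- The relative functor `q̌' → q̌` induced by a simplicial operator. -/
def chkMap {q q' : SimplexCategory} (s : q ⟶ q') :
    RelFunctor (chkRel q) (chkRel q') :=
  ⟨s.toOrderHom.monotone.functor, fun _ _ => trivial⟩

/-- The product of two relative functors. -/
def prodRelFunctor {X X' Y Y' : RelativeCat}
    (F : RelFunctor X X') (G : RelFunctor Y Y') :
    RelFunctor (prodRel X Y) (prodRel X' Y') :=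
  ⟨F.F.prod G.F, fun f h => ⟨F.mapW f.1 h.1, G.mapW f.2 h.2⟩⟩

/-- The `(p,q)`-simplices of the simplicial nerve of a relative category `X`:
the relative functors `p̂ × q̌ → X`. -/
def NSet (X : RelativeCat) (p q : SimplexCategory) : Type :=
  RelFunctor (prodRel (hatRel p) (chkRel q)) X

/-- The bisimplicial operator action on the simplicial nerve, by precomposition. -/
def NMap {X : RelativeCat} {p p' q q' : SimplexCategory}
    (t : p' ⟶ p) (s : q' ⟶ q) : NSet X p q → NSet X p' q' :=
  fun F => (prodRelFunctor (hatMap t) (chkMap s)).comp F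

/-- Postcomposition with a relative functor. -/
def NPost {X Y : RelativeCat} (g : RelFunctor X Y) {p q : SimplexCategory} :
    NSet X p q → NSet Y p q :=
  fun F => F.comp g

open SCat Opposite

/-- The relative category `Rel(A) = (bA, 𝐢𝐝)` of a simplicial category `A`. -/
def RelA (A : SCat) : RelativeCat where
  C := A.BObj
  W := fun {_X _Y} f => IsIdMap f
  id_mem X := isIdMap_id X
  comp_mem _ _ hf hg := isIdMap_comp hf hg

/-- Reindexing of chains along a simplicial operator, making `YA` a simplicial
object in `Cat`. -/
def yReindex (A : SCat) {p p' : SimplexCategory} (t : p' ⟶ p) :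
    YObj A p.len ⥤ YObj A p'.len where
  obj C := t.toOrderHom.monotone.functor ⋙ C
  map η := ⟨CategoryTheory.Functor.whiskerLeft t.toOrderHom.monotone.functor η.1,
    fun i => η.2 _⟩
  map_id _ := rfl
  map_comp _ _ := rfl

/-!
A relative functor `p̂ × q̌ → Rel(A)` is a functor `[p] × [q] → bA` sending the arrows `(id, g)`
to maps of the form `(u, id)`. Currying in the `q`-variable turns it into a `q`-chain of ladders
with such vertical maps, i.e. a `q`-simplex of the nerve of `(YA)_p`. Both sides carry the
simplicial operators by precomposition, so the bijection is natural on the nose.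
-/

def NSet.equivSubtypeFunctor (Y : RelativeCat) (p q : SimplexCategory) :
    NSet Y p q ≃ {F : Fin (p.len + 1) × Fin (q.len + 1) ⥤ Y.C //
      ∀ ⦃j j' : Fin (q.len + 1)⦄ (g : j ⟶ j') (i : Fin (p.len + 1)),
        Y.W (F.map ((𝟙 i, g) : (i, j) ⟶ (i, j')))} where
  toFun F := ⟨F.F, fun j j' g i => F.mapW (A := (i, j)) (B := (i, j')) (𝟙 i, g) ⟨rfl, trivial⟩⟩
  invFun F := ⟨F.1, fun {x y} f hf => by
    obtain ⟨i, j⟩ := x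
    obtain ⟨i', j'⟩ := y
    obtain rfl : i = i' := hf.1
    -- `f.1 : i ⟶ i` is `𝟙 i` by proof irrelevance, as `Fin (p.len + 1)` is a poset
    exact F.2 f.2 i⟩
  left_inv _ := rfl
  right_inv _ := rfl

def SCat.functorYObjEquivSubtype {A : SCat} (C : Type*) [Category C] (k : ℕ) :
    (C ⥤ YObj A k) ≃ {G : C ⥤ Fin (k + 1) ⥤ A.BObj //
      ∀ ⦃c c' : C⦄ (f : c ⟶ c') (i : Fin (k + 1)), IsIdMap ((G.map f).app i)} where
  toFun G := ⟨
    { obj := G.obj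
      map f := (G.map f).1
      map_id c := congrArg Subtype.val (G.map_id c)
      map_comp f g := congrArg Subtype.val (G.map_comp f g) },
    fun _ _ f => (G.map f).2⟩
  invFun G :=
    { obj := G.1.obj
      map f := ⟨G.1.map f, G.2 f⟩
      map_id c := Subtype.ext (G.1.map_id c)
      map_comp f g := Subtype.ext (G.1.map_comp f g) }
  left_inv _ := rfl
  right_inv _ := rfl

def NSet.relAEquivNerveYObj (A : SCat) (p q : SimplexCategory) :
    NSet (RelA A) p q ≃ (nerve (YObj A p.len)).obj (op q) :=
  (NSet.equivSubtypeFunctor (RelA A) p q).trans <|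
    (Functor.curryingFlipEquiv.symm.subtypeEquiv fun _ => Iff.rfl).trans
      (SCat.functorYObjEquivSubtype (Fin (q.len + 1)) p.len).symm

/-- For a simplicial category `A`, the simplicial nerve of the relative category
`Rel(A) = (bA, 𝐢𝐝)` is canonically isomorphic, as a bisimplicial set, to the
result of applying the classical nerve dimensionwise to the simplicial
category-object `YA`: `N(Rel A) ≅ n(YA)`. -/
theorem simplicialNerve_relA_iso_nerve_Y (A : SCat) :
    ∃ e : ∀ p q : SimplexCategory,
      NSet (RelA A) p q ≃ (nerve (YObj A p.len)).obj (op q),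
      (∀ (p q q' : SimplexCategory) (s : q' ⟶ q) (F : NSet (RelA A) p q),
        e p q' (NMap (𝟙 p) s F) = (nerve (YObj A p.len)).map s.op (e p q F)) ∧
      (∀ (p p' : SimplexCategory) (t : p' ⟶ p) (q : SimplexCategory)
        (F : NSet (RelA A) p q),
        e p' q (NMap t (𝟙 q) F) =
          (nerveFunctor.map (X := Cat.of (YObj A p.len)) (Y := Cat.of (YObj A p'.len))
            (yReindex A t).toCatHom).app (op q) (e p q F)) :=
  ⟨NSet.relAEquivNerveYObj A, fun _ _ _ _ _ => rfl, fun _ _ _ _ _ => rfl⟩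
end
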